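/- Let q ∈ ℝ² be a logit vector with q₁ > q₂, let y₁, y₂ > 0, and let t₁, t₂ be temperatures with 1 ≤ t₁ < t₂. If the strict condition y₁ / y₂ < |log(p₂^{t₂}(q) / p₂^{t₁}(q))| / |log(p₁^{t₂}(q) / p₁^{t₁}(q))| holds, then −y₁ · log(p₁^{t₂}(q) / p₁^{t₁}(q)) − y₂ · log(p₂^{t₂}(q) / p₂^{t₁}(q)) < 0. -/
import Mathlib


/-- Temperature-`T` softmax: `p_i^T(q) = exp(q_i/T) / Σ_j exp(q_j/T)`. -/
noncomputable def softmaxT {k : ℕ} (T : ℝ) (q : Fin k → ℝ) (i : Fin k) : ℝ :=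
  Real.exp (q i / T) / ∑ j, Real.exp (q j / T)

lemma softmaxT_pos {k : ℕ} (T : ℝ) (q : Fin k → ℝ) (i : Fin k) :
    0 < softmaxT T q i := by
  apply div_pos (Real.exp_pos _)
  exact Finset.sum_pos (fun j _ => Real.exp_pos _) ⟨i, Finset.mem_univ i⟩

/-- Per-image strict version of Theorem 1 of the paper. -/
theorem per_image_gap_neg
    (q : Fin 2 → ℝ) (hq : q 0 > q 1)
    (y₁ y₂ : ℝ) (hy1 : 0 < y₁) (hy2 : 0 < y₂)
    (t₁ t₂ : ℝ) (ht1 : 1 ≤ t₁) (ht12 : t₁ < t₂)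
    (hcond : y₁ / y₂ <
      |Real.log (softmaxT t₂ q 1 / softmaxT t₁ q 1)| /
      |Real.log (softmaxT t₂ q 0 / softmaxT t₁ q 0)|) :
    - y₁ * Real.log (softmaxT t₂ q 0 / softmaxT t₁ q 0)
      - y₂ * Real.log (softmaxT t₂ q 1 / softmaxT t₁ q 1) < 0 := by
  have ht1' : (0:ℝ) < t₁ := lt_of_lt_of_le one_pos ht1
  have ht2' : (0:ℝ) < t₂ := ht1'.trans ht12
  have hinv : 1 / t₂ < 1 / t₁ := one_div_lt_one_div_of_lt ht1' ht12
  have hkey : q 0 / t₂ + q 1 / t₁ < q 0 / t₁ + q 1 / t₂ := by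
    have h := div_lt_div_of_pos_left (sub_pos.mpr hq) ht1' ht12
    rw [sub_div, sub_div] at h
    linarith
  have hexp : Real.exp (q 0 / t₂) * Real.exp (q 1 / t₁)
      < Real.exp (q 0 / t₁) * Real.exp (q 1 / t₂) := by
    rw [← Real.exp_add, ← Real.exp_add]
    exact Real.exp_lt_exp.mpr hkey
  have hp0 : softmaxT t₂ q 0 < softmaxT t₁ q 0 := by
    unfold softmaxT
    rw [Fin.sum_univ_two, Fin.sum_univ_two,
      div_lt_div_iff₀ (by positivity) (by positivity)]
    nlinarith
  have hp1 : softmaxT t₁ q 1 < softmaxT t₂ q 1 := by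
    unfold softmaxT
    rw [Fin.sum_univ_two, Fin.sum_univ_two,
      div_lt_div_iff₀ (by positivity) (by positivity)]
    nlinarith
  have hA : Real.log (softmaxT t₂ q 0 / softmaxT t₁ q 0) < 0 :=
    Real.log_neg (div_pos (softmaxT_pos _ _ _) (softmaxT_pos _ _ _)) ((div_lt_one (softmaxT_pos t₁ q 0)).mpr hp0)
  have hB : 0 < Real.log (softmaxT t₂ q 1 / softmaxT t₁ q 1) :=
    Real.log_pos ((one_lt_div (softmaxT_pos t₁ q 1)).mpr hp1)
  rw [abs_of_pos hB, abs_of_neg hA] at hcond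
  rw [div_lt_div_iff₀ hy2 (neg_pos.mpr hA)] at hcond
  nlinarith
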